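/- Let G and K be gyrogroups, let φ : G → K be a gyrogroup homomorphism (φ(x⊕y) = φ(x)⊕φ(y) for all x,y ∈ G), and let U = ker φ = {x ∈ G : φ(x) = e_K}. Then for every x ∈ G, x⊕U = x⊞U as subsets of G, where x⊕U = {x⊕u : u ∈ U} and x⊞U = {x⊞u : u ∈ U}. -/
import Mathlib


/-- A gyrogroup: a groupoid with identity, inverses, gyroautomorphisms
satisfying the gyroassociative law and the loop property. -/
structure Gyrogroup (G : Type*) where
  op : G → G → G
  e : G
  inv : G → G
  gyr : G → G → G → G
  op_e : ∀ x, op x e = x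
  e_op : ∀ x, op e x = x
  op_inv : ∀ x, op x (inv x) = e
  inv_op : ∀ x, op (inv x) x = e
  gyr_bijective : ∀ a b, Function.Bijective (gyr a b)
  gyr_hom : ∀ a b x y, gyr a b (op x y) = op (gyr a b x) (gyr a b y)
  gyrassoc : ∀ x y z, op x (op y z) = op (op x y) (gyr x y z)
  loop : ∀ x y, gyr (op x y) y = gyr x y

/-- The gyrogroup cooperation: a ⊞ b = a ⊕ gyr[a, ⊖b] b. -/
def Gyrogroup.coop {G : Type*} (gg : Gyrogroup G) (a b : G) : G :=
  gg.op a (gg.gyr a (gg.inv b) b)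

/-- a ⊟ b = a ⊞ (⊖ b). -/
def Gyrogroup.boxminus {G : Type*} (gg : Gyrogroup G) (a b : G) : G :=
  gg.coop a (gg.inv b)

namespace Gyrogroup

variable {G : Type*} (gg : Gyrogroup G)

/-- Left cancellation (injectivity). -/
theorem op_left_cancel {a b c : G} (h : gg.op a b = gg.op a c) : b = c := by
  have h2 : gg.op (gg.inv a) (gg.op a b) = gg.op (gg.inv a) (gg.op a c) := by rw [h]
  rw [gg.gyrassoc, gg.gyrassoc, gg.inv_op, gg.e_op, gg.e_op] at h2
  exact (gg.gyr_bijective _ _).injective h2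

/-- Gyrations fix the identity. -/
theorem gyr_e (a b : G) : gg.gyr a b gg.e = gg.e := by
  have h : gg.gyr a b (gg.op gg.e gg.e) = gg.op (gg.gyr a b gg.e) (gg.gyr a b gg.e) :=
    gg.gyr_hom a b gg.e gg.e
  rw [gg.e_op] at h
  have h2 : gg.op (gg.gyr a b gg.e) (gg.gyr a b gg.e)
      = gg.op (gg.gyr a b gg.e) gg.e := by rw [gg.op_e, ← h]
  exact gg.op_left_cancel h2

/-- gyr[e, b] is the identity. -/
theorem gyr_e_left (b z : G) : gg.gyr gg.e b z = z := by
  have h := gg.gyrassoc gg.e b z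
  rw [gg.e_op, gg.e_op] at h
  exact (gg.op_left_cancel h).symm

/-- gyr[⊖a, a] is the identity. -/
theorem gyr_inv_self (a z : G) : gg.gyr (gg.inv a) a z = z := by
  have h := congrFun (gg.loop (gg.inv a) a) z
  rw [gg.inv_op] at h
  rw [← h]
  exact gg.gyr_e_left a z

/-- gyr[a, ⊖a] is the identity. -/
theorem gyr_self_inv (a z : G) : gg.gyr a (gg.inv a) z = z := by
  have h := congrFun (gg.loop a (gg.inv a)) z
  rw [gg.op_inv] at h
  rw [← h]
  exact gg.gyr_e_left (gg.inv a) z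

/-- Left cancellation law. -/
theorem inv_op_op (a b : G) : gg.op (gg.inv a) (gg.op a b) = b := by
  rw [gg.gyrassoc, gg.inv_op, gg.e_op, gg.gyr_inv_self]

/-- Second left cancellation law. -/
theorem op_inv_op (a b : G) : gg.op a (gg.op (gg.inv a) b) = b := by
  rw [gg.gyrassoc, gg.op_inv, gg.e_op, gg.gyr_self_inv]

/-- Uniqueness of inverse. -/
theorem eq_inv_of_op {a b : G} (h : gg.op a b = gg.e) : b = gg.inv a :=
  gg.op_left_cancel (h.trans (gg.op_inv a).symm)

theorem inv_inv (a : G) : gg.inv (gg.inv a) = a :=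
  (gg.eq_inv_of_op (gg.inv_op a)).symm

/-- The gyrator identity. -/
theorem gyrator (a b c : G) :
    gg.gyr a b c = gg.op (gg.inv (gg.op a b)) (gg.op a (gg.op b c)) := by
  rw [gg.gyrassoc a b c, gg.inv_op_op]

/-- Right cancellation: (b ⊖ a) ⊞ a = b. -/
theorem coop_right_cancel (a b : G) : gg.coop (gg.op b (gg.inv a)) a = b := by
  unfold coop
  rw [gg.loop b (gg.inv a), ← gg.gyrassoc, gg.inv_op, gg.op_e]

end Gyrogroup

/-- For the kernel U of a gyrogroup homomorphism,
x ⊕ U = x ⊞ U for every x. -/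
theorem stmt_12 {G K : Type*} (gg : Gyrogroup G) (gk : Gyrogroup K)
    (φ : G → K) (hφ : ∀ x y : G, φ (gg.op x y) = gk.op (φ x) (φ y))
    (x : G) :
    gg.op x '' {u : G | φ u = gk.e} = gg.coop x '' {u : G | φ u = gk.e} := by
  have hφe : φ gg.e = gk.e := by
    have h : gk.op (φ gg.e) (φ gg.e) = gk.op (φ gg.e) gk.e := by
      rw [← hφ, gg.op_e, gk.op_e]
    exact gk.op_left_cancel h
  have hφinv : ∀ a : G, φ (gg.inv a) = gk.inv (φ a) := by
    intro a
    apply gk.eq_inv_of_op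
    rw [← hφ, gg.op_inv, hφe]
  have hinve : gk.inv gk.e = gk.e := by
    have := gk.eq_inv_of_op (gk.op_e gk.e)
    exact this.symm
  ext g
  simp only [Set.mem_image, Set.mem_setOf_eq]
  constructor
  · rintro ⟨u, hu, rfl⟩
    refine ⟨gg.inv (gg.op (gg.inv (gg.op x u)) x), ?_, ?_⟩
    · rw [hφinv, hφ, hφinv, hφ, hu, gk.op_e]
      rw [gk.inv_op, hinve]
    · have hw : gg.op (gg.op x u) (gg.inv (gg.inv (gg.op (gg.inv (gg.op x u)) x))) = x := by
        rw [gg.inv_inv, gg.op_inv_op]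
      calc gg.coop x (gg.inv (gg.op (gg.inv (gg.op x u)) x))
          = gg.coop (gg.op (gg.op x u)
              (gg.inv (gg.inv (gg.op (gg.inv (gg.op x u)) x))))
              (gg.inv (gg.op (gg.inv (gg.op x u)) x)) := by rw [hw]
        _ = gg.op x u := gg.coop_right_cancel _ _
  · rintro ⟨u, hu, rfl⟩
    refine ⟨gg.gyr x (gg.inv u) u, ?_, rfl⟩
    rw [gg.gyrator]
    simp only [hφ, hφinv, hu, hinve, gk.op_e, gk.e_op, gk.inv_op]
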